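/- Let X be a Banach space whose modulus of smoothness satisfies 2ρ(t) ≤ γ t^q for some γ > 0 and q > 1. Then with c₁ = 1/(q'·(γq)^{q'−1}) where 1/q + 1/q' = 1, for all nonzero f ∈ X and all φ ∈ X with ‖φ‖ = 1, the distance from f to the span of φ satisfies dist(f, span{φ}) ≤ ‖f‖·(1 − c₁ |F_f(φ)|^{q'}). -/

import Mathlib

/-!
Normalize `u = f / ‖f‖` and rotate `φ` to a unit vector `v` with `F v = |F φ|`. Since `F` is
norming, `‖u + t v‖ ≥ Re F (u + t v) = 1 + t |F φ|`, so the smoothness bound forces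
`‖u - t v‖ ≤ 1 - t |F φ| + γ t ^ q`, which bounds the distance from `f` to `‖f‖ t v ∈ span {φ}`.
The choice `t = (|F φ| / (γ q)) ^ (q' - 1)` maximizes `t |F φ| - γ t ^ q`, with maximum
`|F φ| ^ q' / (q' (γ q) ^ (q' - 1))`.
-/

open Metric

section Smoothness

variable (𝕜 : Type*) [RCLike 𝕜] (X : Type*) [NormedAddCommGroup X] [NormedSpace 𝕜 X]

noncomputable def twiceModulusOfSmoothness (t : ℝ) : ℝ :=
  sSup {r : ℝ | ∃ u v : X, ‖u‖ = 1 ∧ ‖v‖ = 1 ∧ r = ‖u + (t : 𝕜) • v‖ + ‖u - (t : 𝕜) • v‖ - 2}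

variable {𝕜 X}

theorem norm_add_add_norm_sub_sub_two_le_twiceModulusOfSmoothness (t : ℝ) {u v : X}
    (hu : ‖u‖ = 1) (hv : ‖v‖ = 1) :
    ‖u + (t : 𝕜) • v‖ + ‖u - (t : 𝕜) • v‖ - 2 ≤ twiceModulusOfSmoothness 𝕜 X t := by
  refine le_csSup ⟨2 * |t|, ?_⟩ ⟨u, v, hu, hv, rfl⟩
  rintro r ⟨u', v', hu', hv', rfl⟩
  have htv : ‖(t : 𝕜) • v'‖ = |t| := by rw [norm_smul, RCLike.norm_ofReal, hv', mul_one]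
  linarith [norm_add_le u' ((t : 𝕜) • v'), norm_sub_le u' ((t : 𝕜) • v')]

theorem norm_add_add_norm_sub_sub_two_le_of_twiceModulusOfSmoothness_le {γ q t : ℝ} (hq : 0 < q)
    (hρ : ∀ t : ℝ, 0 < t → twiceModulusOfSmoothness 𝕜 X t ≤ γ * t ^ q) (ht : 0 ≤ t) {u v : X}
    (hu : ‖u‖ = 1) (hv : ‖v‖ = 1) :
    ‖u + (t : 𝕜) • v‖ + ‖u - (t : 𝕜) • v‖ - 2 ≤ γ * t ^ q := by
  rcases ht.eq_or_lt with rfl | ht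
  · simp [hu, Real.zero_rpow hq.ne', one_add_one_eq_two]
  · exact (norm_add_add_norm_sub_sub_two_le_twiceModulusOfSmoothness t hu hv).trans (hρ t ht)

end Smoothness

theorem RCLike.exists_norm_eq_one_mul_eq_norm {𝕜 : Type*} [RCLike 𝕜] (z : 𝕜) :
    ∃ θ : 𝕜, ‖θ‖ = 1 ∧ θ * z = ‖z‖ := by
  rcases eq_or_ne z 0 with rfl | hz
  · exact ⟨1, norm_one, by simp⟩
  have hz' : (‖z‖ : 𝕜) ≠ 0 := by exact_mod_cast norm_ne_zero_iff.mpr hz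
  refine ⟨starRingEnd 𝕜 z / ‖z‖, ?_, ?_⟩
  · rw [norm_div, RCLike.norm_conj, RCLike.norm_ofReal, abs_norm, div_self (norm_ne_zero_iff.mpr hz)]
  · rw [div_mul_eq_mul_div, RCLike.conj_mul, sq, mul_div_assoc, div_self hz', mul_one]

theorem infDist_span_singleton_le_of_norm_add_add_norm_sub_le {𝕜 X : Type*} [RCLike 𝕜]
    [NormedAddCommGroup X] [NormedSpace 𝕜 X] {f φ : X} (hf : f ≠ 0) (hφ : ‖φ‖ = 1)
    {F : X →L[𝕜] 𝕜} (hF : ‖F‖ ≤ 1) (hFf : F f = ‖f‖) {t s : ℝ}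
    (hs : ∀ u v : X, ‖u‖ = 1 → ‖v‖ = 1 → ‖u + (t : 𝕜) • v‖ + ‖u - (t : 𝕜) • v‖ - 2 ≤ s) :
    infDist f (Submodule.span 𝕜 {φ} : Set X) ≤ ‖f‖ * (1 - t * ‖F φ‖ + s) := by
  obtain ⟨θ, hθ, hθF⟩ := RCLike.exists_norm_eq_one_mul_eq_norm (F φ)
  have hfn : 0 < ‖f‖ := norm_pos_iff.mpr hf
  have hf' : (‖f‖ : 𝕜) ≠ 0 := by exact_mod_cast hfn.ne'
  set u : X := (‖f‖ : 𝕜)⁻¹ • f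
  set v : X := θ • φ
  have hu : ‖u‖ = 1 := by
    rw [norm_smul, norm_inv, RCLike.norm_ofReal, abs_norm, inv_mul_cancel₀ hfn.ne']
  have hv : ‖v‖ = 1 := by rw [norm_smul, hθ, hφ, one_mul]
  have hFuv : F (u + (t : 𝕜) • v) = ((1 + t * ‖F φ‖ : ℝ) : 𝕜) := by
    simp only [u, v, map_add, map_smul, smul_eq_mul, hFf, inv_mul_cancel₀ hf', hθF]
    push_cast
    ring
  have hlow : 1 + t * ‖F φ‖ ≤ ‖u + (t : 𝕜) • v‖ :=
    calc 1 + t * ‖F φ‖ = RCLike.re (F (u + (t : 𝕜) • v)) := by rw [hFuv, RCLike.ofReal_re]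
      _ ≤ ‖F (u + (t : 𝕜) • v)‖ := RCLike.re_le_norm _
      _ ≤ ‖u + (t : 𝕜) • v‖ := F.le_of_opNorm_le hF _ |>.trans_eq (one_mul _)
  have hmem : ((‖f‖ * t * θ : 𝕜) • φ) ∈ (Submodule.span 𝕜 {φ} : Set X) :=
    Submodule.smul_mem _ _ (Submodule.mem_span_singleton_self φ)
  calc infDist f (Submodule.span 𝕜 {φ} : Set X) ≤ ‖f - (‖f‖ * t * θ : 𝕜) • φ‖ := by
        simpa only [dist_eq_norm] using infDist_le_dist_of_mem hmem
    _ = ‖(‖f‖ : 𝕜) • (u - (t : 𝕜) • v)‖ := by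
        rw [smul_sub, smul_inv_smul₀ hf', smul_smul, smul_smul, mul_assoc]
    _ = ‖f‖ * ‖u - (t : 𝕜) • v‖ := by rw [norm_smul, RCLike.norm_ofReal, abs_norm]
    _ ≤ ‖f‖ * (1 - t * ‖F φ‖ + s) := by gcongr; linarith [hs u v hu hv]

theorem Real.HolderConjugate.mul_sub_mul_rpow_eq {γ q q' a : ℝ} (hqq' : q.HolderConjugate q')
    (hγ : 0 < γ) (ha : 0 ≤ a) :
    (a / (γ * q)) ^ (q' - 1) * a - γ * ((a / (γ * q)) ^ (q' - 1)) ^ q =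
      1 / (q' * (γ * q) ^ (q' - 1)) * a ^ q' := by
  have hγq : 0 < γ * q := mul_pos hγ hqq'.pos
  obtain ⟨b, hb0, rfl⟩ : ∃ b, 0 ≤ b ∧ a = γ * q * b :=
    ⟨a / (γ * q), by positivity, (mul_div_cancel₀ _ hγq.ne').symm⟩
  have hq'1 : q' - 1 + 1 ≠ 0 := by simpa using hqq'.symm.ne_zero
  have hbt : b ^ (q' - 1) * b = b ^ q' := by rw [← Real.rpow_add_one' hb0 hq'1, sub_add_cancel]
  have hγqt : (γ * q) ^ (q' - 1) * (γ * q) = (γ * q) ^ q' := by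
    rw [← Real.rpow_add_one' hγq.le hq'1, sub_add_cancel]
  have hpow : (b ^ (q' - 1)) ^ q = b ^ q' := by
    rw [← Real.rpow_mul hb0, hqq'.symm.sub_one_mul_conj]
  rw [mul_div_cancel_left₀ _ hγq.ne', hpow, Real.mul_rpow hγq.le hb0, ← hγqt, ← hbt]
  field_simp
  rw [mul_right_comm _ q, mul_div_assoc, hqq'.div_conj_eq_sub_one]

theorem stmt_3 {𝕜 : Type*} [RCLike 𝕜] {X : Type*} [NormedAddCommGroup X]
    [NormedSpace 𝕜 X]
    (γ q q' : ℝ) (hγ : 0 < γ) (hq : 1 < q) (hq' : 1 / q + 1 / q' = 1)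
    (hρ : ∀ t : ℝ, 0 < t →
      sSup {r : ℝ | ∃ u v : X, ‖u‖ = 1 ∧ ‖v‖ = 1 ∧
        r = ‖u + (t : 𝕜) • v‖ + ‖u - (t : 𝕜) • v‖ - 2} ≤ γ * t ^ q)
    (f φ : X) (hf : f ≠ 0) (hφ : ‖φ‖ = 1)
    (F : X →L[𝕜] 𝕜) (hF : ‖F‖ = 1) (hFf : F f = (‖f‖ : 𝕜)) :
    Metric.infDist f (Submodule.span 𝕜 {φ} : Set X) ≤
      ‖f‖ * (1 - 1 / (q' * (γ * q) ^ (q' - 1)) * ‖F φ‖ ^ q') := by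
  have hqq' : q.HolderConjugate q' :=
    Real.holderConjugate_iff.mpr ⟨hq, by simpa only [one_div] using hq'⟩
  set t := (‖F φ‖ / (γ * q)) ^ (q' - 1)
  have ht : 0 ≤ t := by positivity
  calc infDist f (Submodule.span 𝕜 {φ} : Set X) ≤ ‖f‖ * (1 - t * ‖F φ‖ + γ * t ^ q) :=
        infDist_span_singleton_le_of_norm_add_add_norm_sub_le hf hφ hF.le hFf fun u v hu hv ↦
          norm_add_add_norm_sub_sub_two_le_of_twiceModulusOfSmoothness_le hqq'.pos hρ ht hu hv
    _ = _ := by rw [sub_add, hqq'.mul_sub_mul_rpow_eq hγ (norm_nonneg _)]
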